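/- arXiv:1307.2824 — 2 statements merged into one kernel-verified Lean document; each statement's English description precedes it below -/
import Mathlib

section
/- For CRRA utility with 0 < γ < 1, U^{OT}_{n,γ} = (1/(1-γ))(∫₀^∞ e^{-rt}β_{n,γ}(s(t))^{1/γ}dt)^γ < (1/(1-γ))(∫₀^∞ e^{-rt}s(t)dt)^γ = U^A_γ, i.e., the fair annuity strictly dominates the optimal tontine in lifetime utility. -/
open Finset MeasureTheory Set

/-- θ_{n,γ}(p) where N(p) - 1 ~ Bin(n-1, p). -/
noncomputable def theta (n : ℕ) (γ p : ℝ) : ℝ :=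
  ∑ k ∈ Finset.range n,
    ((n - 1).choose k : ℝ) * p ^ k * (1 - p) ^ (n - 1 - k) * ((n : ℝ) / (k + 1)) ^ (1 - γ)

/-- β_{n,γ}(p) = p · θ_{n,γ}(p). -/
noncomputable def beta (n : ℕ) (γ p : ℝ) : ℝ := p * theta n γ p


/-!
With `N - 1 ~ Bin(n - 1, p)`, Jensen's inequality for the concave map `x ↦ x ^ (1 - γ)` gives
`θ(p) = E[(n / N) ^ (1 - γ)] ≤ E[n / N] ^ (1 - γ)`, and `E[n / N] = (1 - (1 - p) ^ n) / p < 1 / p`,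
so `β(p) = p θ(p) < p ^ γ`. Hence the tontine payout `β(s t) ^ (1 / γ)` lies strictly below the
annuity payout `s t` at every age `t > 0`, and `x ↦ x ^ γ / (1 - γ)` is strictly increasing.
-/

noncomputable def binomialWeight (m : ℕ) (p : ℝ) (k : ℕ) : ℝ :=
  m.choose k * p ^ k * (1 - p) ^ (m - k)

lemma binomialWeight_nonneg (m : ℕ) {p : ℝ} (hp0 : 0 ≤ p) (hp1 : p ≤ 1) (k : ℕ) :
    0 ≤ binomialWeight m p k := by
  have : 0 ≤ 1 - p := sub_nonneg.2 hp1
  unfold binomialWeight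
  positivity

lemma sum_binomialWeight (m : ℕ) (p : ℝ) : ∑ k ∈ range (m + 1), binomialWeight m p k = 1 := by
  have h := add_pow p (1 - p) m
  rw [add_sub_cancel, one_pow] at h
  rw [h]
  exact sum_congr rfl fun k _ => by unfold binomialWeight; ring

lemma mul_sum_binomialWeight_mul_div_succ (m : ℕ) (p : ℝ) :
    p * ∑ k ∈ range (m + 1), binomialWeight m p k * ((m + 1 : ℝ) / (k + 1))
      = 1 - (1 - p) ^ (m + 1) := by
  have hterm : ∀ k ∈ range (m + 1),
      p * (binomialWeight m p k * ((m + 1 : ℝ) / (k + 1))) = binomialWeight (m + 1) p (k + 1) := by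
    intro k _
    have hchoose : ((m : ℝ) + 1) * m.choose k = (m + 1).choose (k + 1) * ((k : ℝ) + 1) := by
      exact_mod_cast Nat.add_one_mul_choose_eq m k
    simp only [binomialWeight, Nat.add_sub_add_right]
    field_simp
    linear_combination p * p ^ k * (1 - p) ^ (m - k) * hchoose
  rw [mul_sum, sum_congr rfl hterm]
  have hsum := sum_binomialWeight (m + 1) p
  rw [sum_range_succ'] at hsum
  have hzero : binomialWeight (m + 1) p 0 = (1 - p) ^ (m + 1) := by simp [binomialWeight]
  linarith

lemma theta_succ_le (m : ℕ) {γ p : ℝ} (hγ0 : 0 ≤ γ) (hγ1 : γ ≤ 1) (hp0 : 0 ≤ p) (hp1 : p ≤ 1) :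
    theta (m + 1) γ p
      ≤ (∑ k ∈ range (m + 1), binomialWeight m p k * ((m + 1 : ℝ) / (k + 1))) ^ (1 - γ) := by
  have hjensen := (Real.concaveOn_rpow (p := 1 - γ) (by linarith) (by linarith)).le_map_sum
    (t := range (m + 1)) (p := fun k : ℕ => (m + 1 : ℝ) / (k + 1))
    (fun k _ => binomialWeight_nonneg m hp0 hp1 k) (sum_binomialWeight m p)
    (fun k _ => mem_Ici.2 (by positivity))
  simpa [theta, binomialWeight] using hjensen

lemma beta_nonneg (n : ℕ) (γ : ℝ) {p : ℝ} (hp0 : 0 ≤ p) (hp1 : p ≤ 1) : 0 ≤ beta n γ p := by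
  have : 0 ≤ 1 - p := sub_nonneg.2 hp1
  unfold beta theta
  positivity

theorem beta_lt_rpow (n : ℕ) {γ p : ℝ} (hγ0 : 0 ≤ γ) (hγ1 : γ < 1) (hp0 : 0 < p) (hp1 : p < 1) :
    beta n γ p < p ^ γ := by
  cases n with
  | zero => simpa [beta, theta] using Real.rpow_pos_of_pos hp0 γ
  | succ m =>
    set M := ∑ k ∈ range (m + 1), binomialWeight m p k * ((m + 1 : ℝ) / (k + 1)) with hM
    have hM0 : 0 ≤ M :=
      sum_nonneg fun k _ => mul_nonneg (binomialWeight_nonneg m hp0.le hp1.le k) (by positivity)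
    have hMp : M < 1 / p := by
      rw [lt_div_iff₀' hp0, hM, mul_sum_binomialWeight_mul_div_succ]
      linarith [pow_pos (sub_pos.2 hp1) (m + 1)]
    calc beta (m + 1) γ p = p * theta (m + 1) γ p := rfl
      _ ≤ p * M ^ (1 - γ) := by gcongr; exact theta_succ_le m hγ0 hγ1.le hp0.le hp1.le
      _ < p * (1 / p) ^ (1 - γ) := by gcongr
      _ = p ^ γ := by
        rw [Real.div_rpow zero_le_one hp0.le, Real.one_rpow, Real.rpow_sub hp0, Real.rpow_one]
        field_simp

lemma beta_rpow_one_div_lt (n : ℕ) {γ p : ℝ} (hγ0 : 0 < γ) (hγ1 : γ < 1) (hp0 : 0 < p)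
    (hp1 : p < 1) : beta n γ p ^ (1 / γ) < p := by
  rw [one_div, Real.rpow_inv_lt_iff_of_pos (beta_nonneg n γ hp0.le hp1.le) hp0.le hγ0]
  exact beta_lt_rpow n hγ0.le hγ1 hp0 hp1

theorem setIntegral_lt_setIntegral_of_forall_lt {X : Type*} [MeasurableSpace X] {μ : Measure X}
    {s : Set X} {f g : X → ℝ} (hs : MeasurableSet s) (hμs : μ s ≠ 0) (hf : IntegrableOn f s μ)
    (hg : IntegrableOn g s μ) (hlt : ∀ x ∈ s, f x < g x) :
    ∫ x in s, f x ∂μ < ∫ x in s, g x ∂μ := by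
  rw [← sub_pos, ← integral_sub hg hf, setIntegral_pos_iff_support_of_nonneg_ae (f := fun x => g x - f x) ?_ (hg.sub hf)]
  · have : Function.support (fun x => g x - f x) ∩ s = s :=
      inter_eq_right.2 fun x hx => sub_ne_zero.2 (hlt x hx).ne'
    rwa [this, pos_iff_ne_zero]
  · exact (ae_restrict_iff' hs).2 (ae_of_all _ fun x hx => sub_nonneg.2 (hlt x hx).le)

theorem tontine_utility_lt_annuity_utility_gamma_lt_one_general
    (n : ℕ) (γ r : ℝ) (hγ0 : 0 < γ) (hγ1 : γ < 1)
    (s : ℝ → ℝ)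
    (hs : ∀ t : ℝ, 0 < t → 0 < s t ∧ s t < 1)
    (hint : IntegrableOn (fun t => Real.exp (-r * t) * s t) (Ioi 0))
    (hintOT : IntegrableOn (fun t => Real.exp (-r * t) * (beta n γ (s t)) ^ (1 / γ)) (Ioi 0))
    (hJpos : 0 < ∫ t in Ioi (0 : ℝ), Real.exp (-r * t) * (beta n γ (s t)) ^ (1 / γ)) :
    (1 / (1 - γ)) * (∫ t in Ioi (0 : ℝ),
        Real.exp (-r * t) * (beta n γ (s t)) ^ (1 / γ)) ^ γ
      < (1 / (1 - γ)) * (∫ t in Ioi (0 : ℝ), Real.exp (-r * t) * s t) ^ γ := by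
  have hpayout : ∀ t ∈ Ioi (0 : ℝ),
      Real.exp (-r * t) * (beta n γ (s t)) ^ (1 / γ) < Real.exp (-r * t) * s t := fun t ht =>
    mul_lt_mul_of_pos_left (beta_rpow_one_div_lt n hγ0 hγ1 (hs t ht).1 (hs t ht).2) (Real.exp_pos _)
  have hintegral := setIntegral_lt_setIntegral_of_forall_lt measurableSet_Ioi (by simp) hintOT hint
    hpayout
  exact mul_lt_mul_of_pos_left (Real.rpow_lt_rpow hJpos.le hintegral hγ0)
    (one_div_pos.2 (sub_pos.2 hγ1))

theorem tontine_utility_lt_annuity_utility_gamma_lt_one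
    (n : ℕ) (hn : 2 ≤ n) (γ r : ℝ) (hγ0 : 0 < γ) (hγ1 : γ < 1) (hr : 0 < r)
    (s : ℝ → ℝ) (hmeas : Measurable s)
    (hs : ∀ t : ℝ, 0 < t → 0 < s t ∧ s t < 1)
    (hint : IntegrableOn (fun t => Real.exp (-r * t) * s t) (Ioi 0))
    (hIpos : 0 < ∫ t in Ioi (0 : ℝ), Real.exp (-r * t) * s t)
    (hintOT : IntegrableOn (fun t => Real.exp (-r * t) * (beta n γ (s t)) ^ (1 / γ)) (Ioi 0))
    (hJpos : 0 < ∫ t in Ioi (0 : ℝ), Real.exp (-r * t) * (beta n γ (s t)) ^ (1 / γ)) :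
    (1 / (1 - γ)) * (∫ t in Ioi (0 : ℝ),
        Real.exp (-r * t) * (beta n γ (s t)) ^ (1 / γ)) ^ γ
      < (1 / (1 - γ)) * (∫ t in Ioi (0 : ℝ), Real.exp (-r * t) * s t) ^ γ :=
  tontine_utility_lt_annuity_utility_gamma_lt_one_general n γ r hγ0 hγ1 s hs hint hintOT hJpos
end

section
/- For logarithmic utility (γ = 1), the difference U^A₁ - U^{OT}_{n,1} = ∫₀^∞ e^{-rt} s(t) (E[log(N(s(t))/n)] - log s(t)) dt is strictly positive for n ≥ 2, where N(p)-1 ~ Bin(n-1,p). -/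
open Finset MeasureTheory Set

/-- E[log(N(p)/n)] where N(p) - 1 ~ Bin(n-1, p). -/
noncomputable def expLogFrac (n : ℕ) (p : ℝ) : ℝ :=
  ∑ k ∈ Finset.range n,
    ((n - 1).choose k : ℝ) * p ^ k * (1 - p) ^ (n - 1 - k) * Real.log ((k + 1 : ℝ) / n)

/-!
Apply `log x ≤ x - 1` at `x = n p / N` and average over `N - 1 ~ Bin(n - 1, p)`:
`E[log (N / n)] - log p ≥ 1 - E[n p / N]`. The absorption identity
`(k + 1) C(n, k + 1) = n C(n - 1, k)` turns `E[n p / N]` into the binomial expansion of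
`(p + (1 - p)) ^ n` without its `k = 0` term, so `E[n p / N] = 1 - (1 - p) ^ n`. Hence the
integrand is at least `e^{-rt} s(t) (1 - s(t)) ^ n > 0` everywhere on `(0, ∞)`.
-/

lemma sum_range_choose_mul_pow_mul_one_sub_pow (m : ℕ) (p : ℝ) :
    ∑ k ∈ range (m + 1), (m.choose k : ℝ) * p ^ k * (1 - p) ^ (m - k) = 1 := by
  have h := (add_pow p (1 - p) m).symm
  rw [add_sub_cancel, one_pow] at h
  exact (sum_congr rfl fun k _ => by ring).trans h

lemma sum_range_choose_mul_pow_mul_one_sub_pow_mul_div_succ (m : ℕ) (p : ℝ) :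
    ∑ k ∈ range (m + 1),
        (m.choose k : ℝ) * p ^ k * (1 - p) ^ (m - k) * ((m + 1) * p / (k + 1))
      = 1 - (1 - p) ^ (m + 1) := by
  have absorb : ∀ k ∈ range (m + 1),
      (m.choose k : ℝ) * p ^ k * (1 - p) ^ (m - k) * ((m + 1) * p / (k + 1))
        = p ^ (k + 1) * (1 - p) ^ (m + 1 - (k + 1)) * ((m + 1).choose (k + 1) : ℝ) := by
    intro k _
    have h : ((m : ℝ) + 1) * m.choose k = (m + 1).choose (k + 1) * (k + 1) := by
      exact_mod_cast Nat.add_one_mul_choose_eq m k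
    rw [Nat.add_sub_add_right]
    field_simp
    linear_combination p ^ (k + 1) * (1 - p) ^ (m - k) * h
  have h := add_pow p (1 - p) (m + 1)
  rw [add_sub_cancel, one_pow, sum_range_succ'] at h
  rw [sum_congr rfl absorb]
  simpa using eq_sub_of_add_eq h.symm

lemma one_sub_pow_le_expLogFrac_sub_log {n : ℕ} (hn : 1 ≤ n) {p : ℝ} (hp : 0 < p)
    (hp1 : p ≤ 1) :
    (1 - p) ^ n ≤ expLogFrac n p - Real.log p := by
  obtain ⟨m, rfl⟩ := Nat.exists_eq_add_of_le' hn
  set w : ℕ → ℝ := fun k => (m.choose k : ℝ) * p ^ k * (1 - p) ^ (m - k)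
  have termwise : ∀ k ∈ range (m + 1),
      w k * (1 - (m + 1) * p / (k + 1)) ≤ w k * (Real.log ((k + 1) / (m + 1)) - Real.log p) := by
    intro k _
    have hw : 0 ≤ w k := by have := sub_nonneg.mpr hp1; positivity
    refine mul_le_mul_of_nonneg_left ?_ hw
    have hlog := Real.log_le_sub_one_of_pos (x := (m + 1) * p / (k + 1)) (by positivity)
    rw [Real.log_div (by positivity) (by positivity), Real.log_mul (by positivity) hp.ne']
      at hlog
    rw [Real.log_div (by positivity) (by positivity)]
    linarith
  have lhs : ∑ k ∈ range (m + 1), w k * (1 - (m + 1) * p / (k + 1)) = (1 - p) ^ (m + 1) := by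
    simp only [mul_sub, mul_one, sum_sub_distrib, w, sum_range_choose_mul_pow_mul_one_sub_pow,
      sum_range_choose_mul_pow_mul_one_sub_pow_mul_div_succ]
    ring
  have rhs : ∑ k ∈ range (m + 1), w k * (Real.log ((k + 1) / (m + 1)) - Real.log p)
      = expLogFrac (m + 1) p - Real.log p := by
    simp only [mul_sub, sum_sub_distrib, ← sum_mul, w, sum_range_choose_mul_pow_mul_one_sub_pow,
      one_mul, expLogFrac, Nat.add_sub_cancel, Nat.cast_add, Nat.cast_one]
  simpa only [lhs, rhs] using sum_le_sum termwise

lemma setIntegral_pos_of_forall_pos {α : Type*} [MeasurableSpace α] {μ : Measure α} {s : Set α}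
    {f : α → ℝ} (hs : MeasurableSet s) (hμs : μ s ≠ 0) (hf : IntegrableOn f s μ)
    (hpos : ∀ x ∈ s, 0 < f x) : 0 < ∫ x in s, f x ∂μ := by
  have hnonneg : 0 ≤ᵐ[μ.restrict s] f :=
    ae_restrict_of_forall_mem hs fun x hx => (hpos x hx).le
  have hsupport : s ⊆ Function.support f := fun x hx => (hpos x hx).ne'
  rw [setIntegral_pos_iff_support_of_nonneg_ae hnonneg hf, inter_eq_right.mpr hsupport]
  exact pos_iff_ne_zero.mpr hμs

theorem log_utility_annuity_minus_tontine_pos_general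
    (n : ℕ) (hn : 2 ≤ n) (r : ℝ)
    (s : ℝ → ℝ)
    (hs : ∀ t : ℝ, 0 < t → 0 < s t ∧ s t < 1)
    (hint : IntegrableOn
      (fun t => Real.exp (-r * t) * s t * (expLogFrac n (s t) - Real.log (s t))) (Ioi 0)) :
    0 < ∫ t in Ioi (0 : ℝ),
        Real.exp (-r * t) * s t * (expLogFrac n (s t) - Real.log (s t)) := by
  refine setIntegral_pos_of_forall_pos measurableSet_Ioi (by simp) hint fun t ht => ?_
  obtain ⟨hs0, hs1⟩ := hs t ht
  have hgap : 0 < expLogFrac n (s t) - Real.log (s t) :=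
    (pow_pos (sub_pos.mpr hs1) n).trans_le
      (one_sub_pow_le_expLogFrac_sub_log (by omega) hs0 hs1.le)
  positivity

theorem log_utility_annuity_minus_tontine_pos
    (n : ℕ) (hn : 2 ≤ n) (r : ℝ) (hr : 0 < r)
    (s : ℝ → ℝ) (hmeas : Measurable s)
    (hs : ∀ t : ℝ, 0 < t → 0 < s t ∧ s t < 1)
    (hint : IntegrableOn
      (fun t => Real.exp (-r * t) * s t * (expLogFrac n (s t) - Real.log (s t))) (Ioi 0)) :
    0 < ∫ t in Ioi (0 : ℝ),
        Real.exp (-r * t) * s t * (expLogFrac n (s t) - Real.log (s t)) :=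
  log_utility_annuity_minus_tontine_pos_general n hn r s hs hint
end
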